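/- arXiv:2312.04419 — 8 statements merged into one kernel-verified Lean document; each statement's English description precedes it below -/
import Mathlib

section
/- For any point x in a convex set C ⊆ ℝⁿ, the minimal face of C containing x equals the union of all closed segments [y,z] contained in C such that x lies in the open segment (y,z). -/
/-!
The minimal face of `x ∈ C` is the set of points `u ∈ C` for which the segment `[u, x]` can be
prolonged beyond `x` inside `C`. This set is a face containing `x`, and each of its points `u` is
an endpoint of the segment `[u, x + ε • (x - u)] ⊆ C`, whose interior contains `x`. Conversely,
a face containing `x` contains both endpoints, hence all, of any segment of `C` through `x`.
-/

open Set Metric RealInnerProductSpace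

variable {E : Type*} [NormedAddCommGroup E] [NormedSpace ℝ E]

/-- A face of a convex set: a convex subset `F` of `C` such that any open segment of `C`
meeting `F` has both endpoints in `F`. -/
def IsFace (C F : Set E) : Prop := Convex ℝ F ∧ IsExtreme ℝ C F

/-- Dimension of a convex set: the dimension of its affine hull. -/
noncomputable def sdim (S : Set E) : ℕ := Module.finrank ℝ (affineSpan ℝ S).direction

/-- The facial dimension signature: the set of dimensions of nonempty faces. -/
def faceDimSig (C : Set E) : Set ℕ :=
  {d | ∃ F : Set E, IsFace C F ∧ F.Nonempty ∧ sdim F = d}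

/-- The minimal face of `C` containing `x`. -/
def minFace (C : Set E) (x : E) : Set E := ⋂₀ {F | IsFace C F ∧ x ∈ F}

section Prolongation

variable {V : Type*} [AddCommGroup V] [Module ℝ V] {C : Set V} {x : V}

def prolongableThrough (C : Set V) (x : V) : Set V :=
  {u | u ∈ C ∧ ∃ ε : ℝ, 0 < ε ∧ x + ε • (x - u) ∈ C}

lemma self_mem_prolongableThrough (hx : x ∈ C) : x ∈ prolongableThrough C x :=
  ⟨hx, 1, one_pos, by simpa using hx⟩

lemma mem_openSegment_self_add_smul_sub (u : V) {ε : ℝ} (hε : 0 < ε) :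
    x ∈ openSegment ℝ u (x + ε • (x - u)) := by
  refine ⟨ε / (1 + ε), 1 / (1 + ε), by positivity, by positivity, by field_simp; ring, ?_⟩
  match_scalars
  · ring
  · field_simp

lemma Convex.add_smul_mem_of_le (hC : Convex ℝ C) (hx : x ∈ C) {v : V} {ε δ : ℝ}
    (hε : 0 < ε) (hv : x + ε • v ∈ C) (hδ : 0 ≤ δ) (hδε : δ ≤ ε) : x + δ • v ∈ C := by
  have h := hC.add_smul_mem hx hv (t := δ / ε) ⟨by positivity, (div_le_one hε).2 hδε⟩
  rwa [smul_smul, div_mul_cancel₀ δ hε.ne'] at h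

lemma Convex.prolongableThrough (hC : Convex ℝ C) : Convex ℝ (prolongableThrough C x) := by
  rintro u₁ ⟨hu₁, ε₁, hε₁, hv₁⟩ u₂ ⟨hu₂, ε₂, hε₂, hv₂⟩ a b ha hb hab
  have hx : x ∈ C := hC.openSegment_subset hu₁ hv₁ (mem_openSegment_self_add_smul_sub u₁ hε₁)
  set ε := min ε₁ ε₂
  have hε : 0 < ε := lt_min hε₁ hε₂
  have hw₁ := hC.add_smul_mem_of_le hx hε₁ hv₁ hε.le (min_le_left _ _)
  have hw₂ := hC.add_smul_mem_of_le hx hε₂ hv₂ hε.le (min_le_right _ _)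
  refine ⟨hC hu₁ hu₂ ha hb hab, ε, hε, ?_⟩
  convert hC hw₁ hw₂ ha hb hab using 1
  obtain rfl : b = 1 - a := by linarith
  module

lemma isExtreme_prolongableThrough (hC : Convex ℝ C) :
    IsExtreme ℝ C (prolongableThrough C x) := by
  refine ⟨fun _ hu ↦ hu.1, ?_⟩
  rintro u₁ hu₁ u₂ hu₂ _ ⟨-, ε, hε, hv⟩ ⟨a, b, ha, hb, hab, rfl⟩
  have hden : 0 < 1 + ε * b := by positivity
  refine ⟨hu₁, a * ε / (1 + ε * b), by positivity, ?_⟩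
  -- The segment from the prolongation point of `a • u₁ + b • u₂` to `u₂` crosses the ray from
  -- `u₁` through `x` beyond `x`; the crossing point is the new prolongation point of `u₁`.
  convert hC hv hu₂ (a := 1 / (1 + ε * b)) (b := ε * b / (1 + ε * b)) (by positivity)
    (by positivity) (by field_simp) using 1
  obtain rfl : b = 1 - a := by linarith
  match_scalars <;> field_simp <;> ring

lemma prolongableThrough_subset_segments (hC : Convex ℝ C) :
    prolongableThrough C x ⊆
      {u | ∃ y z, segment ℝ y z ⊆ C ∧ x ∈ openSegment ℝ y z ∧ u ∈ segment ℝ y z} :=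
  fun u ⟨hu, _, hε, hv⟩ ↦ ⟨u, _, hC.segment_subset hu hv,
    mem_openSegment_self_add_smul_sub u hε, left_mem_segment ℝ _ _⟩

end Prolongation

lemma isFace_prolongableThrough {C : Set E} {x : E} (hC : Convex ℝ C) :
    IsFace C (prolongableThrough C x) :=
  ⟨hC.prolongableThrough, isExtreme_prolongableThrough hC⟩

lemma IsFace.segment_subset_of_mem_openSegment {C F : Set E} {x y z : E} (hF : IsFace C F)
    (hxF : x ∈ F) (hy : y ∈ C) (hz : z ∈ C) (hx : x ∈ openSegment ℝ y z) :
    segment ℝ y z ⊆ F :=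
  hF.1.segment_subset (hF.2.left_mem_of_mem_openSegment hy hz hxF hx)
    (hF.2.right_mem_of_mem_openSegment hy hz hxF hx)

theorem minFace_eq_union_segments {n : ℕ} (C : Set (EuclideanSpace ℝ (Fin n)))
    (hC : Convex ℝ C) (x : EuclideanSpace ℝ (Fin n)) (hx : x ∈ C) :
    minFace C x =
      {u | ∃ y z : EuclideanSpace ℝ (Fin n),
        segment ℝ y z ⊆ C ∧ x ∈ openSegment ℝ y z ∧ u ∈ segment ℝ y z} := by
  refine Subset.antisymm ?_ ?_
  · calc minFace C x ⊆ prolongableThrough C x :=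
          sInter_subset_of_mem ⟨isFace_prolongableThrough hC, self_mem_prolongableThrough hx⟩
      _ ⊆ _ := prolongableThrough_subset_segments hC
  · refine subset_sInter ?_
    rintro F ⟨hF, hxF⟩ u ⟨y, z, hyz, hxyz, hu⟩
    exact hF.segment_subset_of_mem_openSegment hxF (hyz (left_mem_segment ℝ y z))
      (hyz (right_mem_segment ℝ y z)) hxyz hu
end

section
/- Let C and D be convex subsets of ℝⁿ. Then the nonempty faces of C ∩ D are exactly the nonempty sets of the form E ∩ F where E is a face of C and F is a face of D. -/
open Set Metric RealInnerProductSpace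

variable {E : Type*} [NormedAddCommGroup E] [NormedSpace ℝ E]

/-!
Let `G` be a nonempty face of `C ∩ D` and `x` a point of its relative interior. In a convex set
`K`, the points `y` such that the segment from `y` through `x` can be prolonged beyond `x` inside
`K` form a face of `K`. For `K = C ∩ D` this face is `G`: it contains `G` because `x` is relatively
interior to `G`, and it lies in `G` because `G` is a face containing `x`. A segment can be
prolonged inside `C ∩ D` as soon as it can be prolonged inside `C` and inside `D`, so this face is
the intersection of the corresponding faces of `C` and of `D`.
-/

section Module

variable {V : Type*} [AddCommGroup V] [Module ℝ V]

/-- For convex `C` and `x ∈ C`, the smallest face of `C` containing `x`. -/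
def generatedFace (C : Set V) (x : V) : Set V := {y ∈ C | ∃ s : ℝ, 0 < s ∧ x + s • (x - y) ∈ C}

lemma mem_openSegment_add_smul_sub {x y : V} {s : ℝ} (hs : 0 < s) :
    x ∈ openSegment ℝ y (x + s • (x - y)) :=
  ⟨s / (1 + s), 1 / (1 + s), by positivity, by positivity, by field_simp; ring, by
    match_scalars <;> field_simp; ring⟩

lemma Convex.add_smul_mem_of_le_s1 {C : Set V} (hC : Convex ℝ C) {x v : V} {s t : ℝ}
    (hx : x ∈ C) (hs : x + s • v ∈ C) (ht₀ : 0 ≤ t) (hts : t ≤ s) : x + t • v ∈ C := by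
  rcases ht₀.eq_or_lt with rfl | ht₀
  · simpa using hx
  have hs₀ : 0 < s := ht₀.trans_le hts
  have h := hC.add_smul_mem hx hs (t := t / s) ⟨by positivity, (div_le_one hs₀).2 hts⟩
  rwa [smul_smul, div_mul_cancel₀ t hs₀.ne'] at h

lemma Convex.mem_of_mem_generatedFace {C : Set V} (hC : Convex ℝ C) {x y : V}
    (hy : y ∈ generatedFace C x) : x ∈ C := by
  obtain ⟨hyC, s, hs, hzC⟩ := hy
  exact hC.openSegment_subset hyC hzC (mem_openSegment_add_smul_sub hs)

lemma Convex.convex_generatedFace {C : Set V} (hC : Convex ℝ C) (x : V) :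
    Convex ℝ (generatedFace C x) := by
  intro y₁ hy₁ y₂ hy₂ a b ha hb hab
  obtain ⟨hy₁C, s₁, hs₁, hz₁⟩ := hy₁
  obtain ⟨hy₂C, s₂, hs₂, hz₂⟩ := hy₂
  have hx : x ∈ C := hC.mem_of_mem_generatedFace ⟨hy₁C, s₁, hs₁, hz₁⟩
  have hs : 0 < min s₁ s₂ := lt_min hs₁ hs₂
  refine ⟨hC hy₁C hy₂C ha hb hab, min s₁ s₂, hs, ?_⟩
  have h₁ := hC.add_smul_mem_of_le_s1 hx hz₁ hs.le (min_le_left s₁ s₂)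
  have h₂ := hC.add_smul_mem_of_le_s1 hx hz₂ hs.le (min_le_right s₁ s₂)
  convert hC h₁ h₂ ha hb hab using 1
  obtain rfl : b = 1 - a := by linarith
  match_scalars <;> ring

lemma Convex.isExtreme_generatedFace {C : Set V} (hC : Convex ℝ C) (x : V) :
    IsExtreme ℝ C (generatedFace C x) := by
  refine ⟨fun y hy => hy.1, ?_⟩
  rintro y₁ hy₁ y₂ hy₂ p ⟨-, s, hs, hq⟩ ⟨a, b, ha, hb, hab, rfl⟩
  refine ⟨hy₁, a * s / (1 + b * s), by positivity, ?_⟩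
  convert hC hq hy₂ (by positivity : 0 ≤ 1 / (1 + b * s)) (by positivity : 0 ≤ b * s / (1 + b * s))
    (by field_simp) using 1
  match_scalars <;> field_simp
  · linear_combination s * hab
  · ring

lemma Convex.generatedFace_inter {C D : Set V} (hC : Convex ℝ C) (hD : Convex ℝ D) (x : V) :
    generatedFace (C ∩ D) x = generatedFace C x ∩ generatedFace D x := by
  ext y
  constructor
  · rintro ⟨⟨hyC, hyD⟩, s, hs, hzC, hzD⟩
    exact ⟨⟨hyC, s, hs, hzC⟩, ⟨hyD, s, hs, hzD⟩⟩
  · rintro ⟨hyC', hyD'⟩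
    have hxC := hC.mem_of_mem_generatedFace hyC'
    have hxD := hD.mem_of_mem_generatedFace hyD'
    obtain ⟨hyC, s₁, hs₁, hzC⟩ := hyC'
    obtain ⟨hyD, s₂, hs₂, hzD⟩ := hyD'
    have hs : 0 < min s₁ s₂ := lt_min hs₁ hs₂
    exact ⟨⟨hyC, hyD⟩, min s₁ s₂, hs, hC.add_smul_mem_of_le_s1 hxC hzC hs.le (min_le_left s₁ s₂),
      hD.add_smul_mem_of_le_s1 hxD hzD hs.le (min_le_right s₁ s₂)⟩

end Module

section Topology

open Filter Topology

variable {V : Type*} [AddCommGroup V] [Module ℝ V] [TopologicalSpace V] [IsTopologicalAddGroup V]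
  [ContinuousSMul ℝ V]

lemma exists_add_smul_sub_mem_of_mem_intrinsicInterior {G : Set V} {x y : V}
    (hx : x ∈ intrinsicInterior ℝ G) (hy : y ∈ G) : ∃ s : ℝ, 0 < s ∧ x + s • (x - y) ∈ G := by
  obtain ⟨x', hx', rfl⟩ := mem_intrinsicInterior.1 hx
  let ray : ℝ → affineSpan ℝ G := fun s =>
    ⟨s • ((x' : V) -ᵥ y) +ᵥ (x' : V),
      AffineSubspace.smul_vsub_vadd_mem _ s x'.2 (subset_affineSpan ℝ G hy) x'.2⟩
  have hray : Tendsto ray (𝓝 0) (𝓝 x') := by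
    have : Continuous ray := by fun_prop
    simpa [ray] using this.tendsto 0
  have hnear : ∀ᶠ s in 𝓝[>] (0 : ℝ), ray s ∈ ((↑) ⁻¹' G : Set (affineSpan ℝ G)) :=
    (hray.eventually_mem (mem_interior_iff_mem_nhds.1 hx')).filter_mono nhdsWithin_le_nhds
  obtain ⟨s, hsG, hs⟩ := (hnear.and self_mem_nhdsWithin).exists
  exact ⟨s, hs, by simpa [ray, add_comm] using hsG⟩

lemma IsExtreme.generatedFace_eq {K G : Set V} (hG : IsExtreme ℝ K G) {x : V}
    (hx : x ∈ intrinsicInterior ℝ G) : generatedFace K x = G := by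
  ext y
  constructor
  · rintro ⟨hyK, s, hs, hzK⟩
    exact hG.left_mem_of_mem_openSegment hyK hzK (intrinsicInterior_subset hx)
      (mem_openSegment_add_smul_sub hs)
  · intro hy
    obtain ⟨s, hs, hzG⟩ := exists_add_smul_sub_mem_of_mem_intrinsicInterior hx hy
    exact ⟨hG.1 hy, s, hs, hG.1 hzG⟩

end Topology

lemma Convex.isFace_generatedFace {C : Set E} (hC : Convex ℝ C) (x : E) :
    IsFace C (generatedFace C x) :=
  ⟨hC.convex_generatedFace x, hC.isExtreme_generatedFace x⟩

lemma IsFace.inter {C D F G : Set E} (hF : IsFace C F) (hG : IsFace D G) :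
    IsFace (C ∩ D) (F ∩ G) :=
  ⟨hF.1.inter hG.1, inter_subset_inter hF.2.1 hG.2.1, fun _ hy₁ _ hy₂ _ hx hxy =>
    ⟨hF.2.left_mem_of_mem_openSegment hy₁.1 hy₂.1 hx.1 hxy,
      hG.2.left_mem_of_mem_openSegment hy₁.2 hy₂.2 hx.2 hxy⟩⟩

theorem faces_of_inter {n : ℕ} (C D : Set (EuclideanSpace ℝ (Fin n)))
    (hC : Convex ℝ C) (hD : Convex ℝ D) :
    {F : Set (EuclideanSpace ℝ (Fin n)) | IsFace (C ∩ D) F ∧ F.Nonempty} =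
      {G : Set (EuclideanSpace ℝ (Fin n)) |
        (∃ E' F', IsFace C E' ∧ IsFace D F' ∧ G = E' ∩ F') ∧ G.Nonempty} := by
  ext G
  constructor
  · rintro ⟨hG, hne⟩
    obtain ⟨x, hx⟩ := hne.intrinsicInterior hG.1
    refine ⟨⟨generatedFace C x, generatedFace D x, hC.isFace_generatedFace x,
      hD.isFace_generatedFace x, ?_⟩, hne⟩
    rw [← hC.generatedFace_inter hD, hG.2.generatedFace_eq hx]
  · rintro ⟨⟨F, F', hF, hF', rfl⟩, hne⟩
    exact ⟨hF.inter hF', hne⟩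
end

section
/- Suppose x lies in the relative interior of a face F of a convex set C ⊆ ℝⁿ, and x also lies in the interior of another convex set D ⊆ ℝⁿ. Then E := F ∩ D is a face of C ∩ D and dim E = dim F. -/
open Set Metric RealInnerProductSpace

variable {E : Type*} [NormedAddCommGroup E] [NormedSpace ℝ E]

open Topology

/-! Since `x` is interior to `D`, the set `F ∩ D` contains a neighbourhood of `x` relative to the
affine hull of `F`, and a nonempty relatively open subset of an affine subspace spans it. -/

theorem IsExtreme.inter_inter {𝕜 V : Type*} [Semiring 𝕜] [PartialOrder 𝕜] [AddCommMonoid V]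
    [SMul 𝕜 V] {A B : Set V} (hAB : IsExtreme 𝕜 A B) (D : Set V) :
    IsExtreme 𝕜 (A ∩ D) (B ∩ D) :=
  ⟨inter_subset_inter_left D hAB.1, fun _ hx₁ _ hx₂ _ hx hseg =>
    ⟨hAB.left_mem_of_mem_openSegment hx₁.1 hx₂.1 hx.1 hseg, hx₁.2⟩⟩

theorem IsFace.inter_of_convex {C F D : Set E} (hF : IsFace C F) (hD : Convex ℝ D) :
    IsFace (C ∩ D) (F ∩ D) :=
  ⟨hF.1.inter hD, hF.2.inter_inter D⟩

theorem affineSpan_inter_nhds_of_mem_intrinsicInterior {V P : Type*} [NormedAddCommGroup V]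
    [NormedSpace ℝ V] [MetricSpace P] [NormedAddTorsor V P] {s U : Set P} {x : P}
    (hx : x ∈ intrinsicInterior ℝ s) (hU : U ∈ 𝓝 x) :
    affineSpan ℝ (s ∩ U) = affineSpan ℝ s := by
  rw [mem_intrinsicInterior] at hx
  obtain ⟨y, hy, rfl⟩ := hx
  have : Nonempty (affineSpan ℝ s) := ⟨y⟩
  set u : Set (affineSpan ℝ s) := interior ((↑) ⁻¹' s) ∩ (↑) ⁻¹' interior U
  have hspan : affineSpan ℝ u = ⊤ :=
    (isOpen_interior.inter (isOpen_interior.preimage continuous_subtype_val)).affineSpan_eq_top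
      ⟨y, hy, mem_interior_iff_mem_nhds.2 hU⟩
  have hle : affineSpan ℝ u ≤ (affineSpan ℝ (s ∩ U)).comap (affineSpan ℝ s).subtype := by
    rw [affineSpan_le]
    rintro p ⟨hps, hpU⟩
    exact subset_affineSpan ℝ _ ⟨mem_preimage.1 (interior_subset hps), interior_subset hpU⟩
  refine le_antisymm (affineSpan_mono ℝ inter_subset_left) fun p hp => ?_
  simpa using hle (hspan ▸ AffineSubspace.mem_top ℝ _ (⟨p, hp⟩ : affineSpan ℝ s))

theorem face_inter_interior_general {n : ℕ} (C D F : Set (EuclideanSpace ℝ (Fin n)))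
    (hD : Convex ℝ D) (hF : IsFace C F)
    (x : EuclideanSpace ℝ (Fin n)) (hx : x ∈ intrinsicInterior ℝ F) (hxD : x ∈ interior D) :
    IsFace (C ∩ D) (F ∩ D) ∧ sdim (F ∩ D) = sdim F := by
  refine ⟨hF.inter_of_convex hD, ?_⟩
  rw [sdim, sdim,
    affineSpan_inter_nhds_of_mem_intrinsicInterior hx (mem_interior_iff_mem_nhds.1 hxD)]

theorem face_inter_interior {n : ℕ} (C D F : Set (EuclideanSpace ℝ (Fin n)))
    (hC : Convex ℝ C) (hD : Convex ℝ D) (hF : IsFace C F)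
    (x : EuclideanSpace ℝ (Fin n)) (hx : x ∈ intrinsicInterior ℝ F) (hxD : x ∈ interior D) :
    IsFace (C ∩ D) (F ∩ D) ∧ sdim (F ∩ D) = sdim F :=
  face_inter_interior_general C D F hD hF x hx hxD
end

section
/- Fix n ≥ 2, i ∈ {1,…,n−1}, and constants c, r > 0 with r > c. Let Cᵢⁿ = {x ∈ ℝⁿ : (x_{i+1}+c)² + x_{i+2}² + ⋯ + x_n² ≤ r²}. Then the facial dimension signature of Cᵢⁿ is exactly {i, n}, and every proper face of Cᵢⁿ is of the form ℝⁱ ⊕ {x̄} for a point x̄ on the boundary sphere of the (n−i)-dimensional ball of radius r centered at −c·e₁, and is exposed. -/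
open Set Metric RealInnerProductSpace

variable {E : Type*} [NormedAddCommGroup E] [NormedSpace ℝ E]

/-- The cylindrical set Cᵢⁿ (0-based index `i` corresponds to the paper coordinate `i+1`). -/
def Cyl (n : ℕ) (c r : ℝ) (i : Fin n) : Set (EuclideanSpace ℝ (Fin n)) :=
  {x | (x i + c) ^ 2 + ∑ j ∈ Finset.Ioi i, (x j) ^ 2 ≤ r ^ 2}

/-! The cylinder is the preimage `π ⁻¹' B` of the closed ball `B` of radius `r` about `-c e_I`
under the projection `π` onto the coordinates `≥ I`. A face meeting the preimage of the open
ball meets the interior of the cylinder, hence is the whole cylinder. So a proper face `F` is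
mapped into the sphere, and since `π '' F` is convex and the ball is strictly convex, `π` is
constant on `F`, say equal to `π x`. Being extreme, `F` contains the whole fibre of `π` through
each of its points, so `F = π ⁻¹' {π x}`, an affine subspace of dimension `dim ker π = I`.
Conversely each such fibre is exposed, by the functional `y ↦ ⟪π x - p, π y⟫` where `p` is the
centre of `B`. -/

theorem IsExtreme.eq_of_mem_interior {A B : Set E} (hB : IsExtreme ℝ A B) {x : E} (hxB : x ∈ B)
    (hxA : x ∈ interior A) : B = A := by
  refine hB.1.antisymm fun z hz => ?_
  have hline : Filter.Tendsto (fun t : ℝ => x + t • (x - z)) (nhds 0) (nhds x) :=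
    (by fun_prop : Continuous fun t : ℝ => x + t • (x - z)).tendsto' 0 x (by simp)
  -- `x` lies strictly between `z` and a point of `A` just beyond `x` on the ray from `z`.
  obtain ⟨t, hwA, ht⟩ := ((hline.eventually (isOpen_interior.mem_nhds hxA)).filter_mono
    nhdsWithin_le_nhds |>.and (self_mem_nhdsWithin (s := Ioi (0 : ℝ)))).exists
  have ht1 : 0 < 1 + t := by linarith
  refine hB.2 hz (interior_subset hwA) hxB ⟨t / (1 + t), 1 / (1 + t), div_pos ht ht1,
    one_div_pos.2 ht1, by field_simp; ring, ?_⟩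
  match_scalars
  · field_simp; ring
  · field_simp

theorem IsExtreme.preimage_singleton_subset {F : Type*} [AddCommGroup F] [Module ℝ F] {S : Set F}
    (π : E →ₗ[ℝ] F) {B : Set E} (hB : IsExtreme ℝ (π ⁻¹' S) B) {x : E} (hx : x ∈ B) :
    π ⁻¹' {π x} ⊆ B := by
  -- `x` is the midpoint of `y` and `2 • x - y`, which lie in the same fibre as `x`.
  intro y (hy : π y = π x)
  have hxS : π x ∈ S := hB.1 hx
  have hw : π (2 • x - y) = π x := by
    rw [map_sub, map_nsmul, hy]; abel
  refine hB.2 (show π y ∈ S from hy ▸ hxS) (show π (2 • x - y) ∈ S from hw ▸ hxS)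
    hx ⟨1 / 2, 1 / 2, by norm_num, by norm_num, by norm_num, ?_⟩
  rw [two_nsmul]; match_scalars <;> ring

theorem IsExposed.preimage {F : Type*} [AddCommGroup F] [Module ℝ F] [TopologicalSpace F]
    {A B : Set F} (hB : IsExposed ℝ A B) (π : E →L[ℝ] F) :
    IsExposed ℝ (π ⁻¹' A) (π ⁻¹' B) := by
  rintro ⟨x₀, hx₀⟩
  obtain ⟨l, rfl⟩ := hB ⟨π x₀, hx₀⟩
  refine ⟨l ∘L π, Subset.antisymm (fun x hx => ⟨hx.1, fun y hy => hx.2 (π y) hy⟩) ?_⟩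
  rintro x ⟨hxA, hmax⟩
  exact ⟨hxA, fun y hy => (hx₀.2 y hy).trans (hmax x₀ hx₀.1)⟩

theorem Convex.subsingleton_of_subset_sphere {F : Type*} [NormedAddCommGroup F] [NormedSpace ℝ F]
    [StrictConvexSpace ℝ F] {T : Set F} (hT : Convex ℝ T) {p : F} {r : ℝ}
    (h : T ⊆ sphere p r) : T.Subsingleton := by
  intro x hx y hy
  by_contra hne
  have hmid := combo_mem_ball_of_ne (sphere_subset_closedBall (h hx))
    (sphere_subset_closedBall (h hy)) hne (by norm_num : (0 : ℝ) < 1 / 2)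
    (by norm_num : (0 : ℝ) < 1 / 2) (by norm_num)
  exact (mem_ball.1 hmid).ne (h (hT hx hy (by norm_num) (by norm_num) (by norm_num)))

theorem isExposed_closedBall_singleton {F : Type*} [NormedAddCommGroup F] [InnerProductSpace ℝ F]
    {p x : F} {r : ℝ} (hx : x ∈ sphere p r) : IsExposed ℝ (closedBall p r) {x} := by
  intro _
  refine ⟨innerSL ℝ (x - p), ?_⟩
  have hxp : ‖x - p‖ = r := by rw [← dist_eq_norm]; exact hx
  have key : ∀ y ∈ closedBall p r, ‖y - x‖ ^ 2 ≤ 2 * (⟪x - p, x⟫ - ⟪x - p, y⟫) := by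
    intro y hy
    have hyp : ‖y - p‖ ≤ r := by rw [← dist_eq_norm]; exact hy
    have := norm_sub_sq_real (y - p) (x - p)
    rw [sub_sub_sub_cancel_right] at this
    have h2 : ⟪x - p, x⟫ - ⟪x - p, y⟫ = ‖x - p‖ ^ 2 - ⟪y - p, x - p⟫ := by
      rw [← inner_sub_right, real_inner_comm (x - p) (y - p), ← real_inner_self_eq_norm_sq,
        ← inner_sub_right, sub_sub_sub_cancel_right]
    rw [this, h2, hxp]
    nlinarith [norm_nonneg (y - p)]
  ext y
  simp only [mem_singleton_iff, mem_ofPred_eq, innerSL_apply_apply]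
  constructor
  · rintro rfl
    exact ⟨sphere_subset_closedBall hx, fun z hz => by nlinarith [key z hz, sq_nonneg ‖z - y‖]⟩
  · rintro ⟨hy, hmax⟩
    have h0 : ‖y - x‖ ^ 2 ≤ 0 := by linarith [key y hy, hmax x (sphere_subset_closedBall hx)]
    exact sub_eq_zero.1 (norm_eq_zero.1 (pow_eq_zero_iff two_ne_zero |>.1
      (le_antisymm h0 (sq_nonneg _))))

theorem sdim_preimage_singleton {F : Type*} [AddCommGroup F] [Module ℝ F]
    (π : E →ₗ[ℝ] F) (x : E) : sdim (π ⁻¹' {π x}) = Module.finrank ℝ (LinearMap.ker π) := by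
  have : π ⁻¹' {π x} = (AffineSubspace.mk' x (LinearMap.ker π) : Set E) := by
    ext y
    simp [AffineSubspace.mem_mk', sub_eq_zero]
  rw [sdim, this, AffineSubspace.affineSpan_coe, AffineSubspace.direction_mk']

theorem sdim_of_interior_nonempty [FiniteDimensional ℝ E] {S : Set E}
    (h : (interior S).Nonempty) : sdim S = Module.finrank ℝ E := by
  have : affineSpan ℝ S = ⊤ :=
    top_unique ((isOpen_interior.affineSpan_eq_top h).symm.trans_le
      (affineSpan_mono ℝ interior_subset))
  rw [sdim, this, AffineSubspace.direction_top, finrank_top]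

section PreimageBall

variable {F : Type*} [NormedAddCommGroup F] [NormedSpace ℝ F]

theorem preimage_ball_subset_interior_preimage_closedBall (π : E →L[ℝ] F) (p : F) (r : ℝ) :
    π ⁻¹' ball p r ⊆ interior (π ⁻¹' closedBall p r) :=
  interior_maximal (preimage_mono ball_subset_closedBall) (isOpen_ball.preimage π.continuous)

variable {π : E →L[ℝ] F} {p : F} {r : ℝ}

theorem IsFace.subset_preimage_sphere {B : Set E} (hB : IsFace (π ⁻¹' closedBall p r) B)
    (hne : B ≠ π ⁻¹' closedBall p r) : B ⊆ π ⁻¹' sphere p r := by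
  intro x hx
  refine (hB.2.1 hx : dist (π x) p ≤ r).eq_or_lt.resolve_right fun hlt => hne ?_
  exact hB.2.eq_of_mem_interior hx (preimage_ball_subset_interior_preimage_closedBall π p r hlt)

theorem IsFace.eq_preimage_singleton [StrictConvexSpace ℝ F] {B : Set E}
    (hB : IsFace (π ⁻¹' closedBall p r) B) (hne : B ≠ π ⁻¹' closedBall p r) {x : E}
    (hx : x ∈ B) : π x ∈ sphere p r ∧ B = π ⁻¹' {π x} := by
  have hsphere := hB.subset_preimage_sphere hne
  have hsub : (π '' B).Subsingleton :=
    (hB.1.linear_image π.toLinearMap).subsingleton_of_subset_sphere (image_subset_iff.2 hsphere)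
  refine ⟨hsphere hx, Subset.antisymm (fun y hy => ?_) ?_⟩
  · exact hsub (mem_image_of_mem π hy) (mem_image_of_mem π hx)
  · exact hB.2.preimage_singleton_subset π.toLinearMap hx

end PreimageBall

section ExposedFibre

variable {F : Type*} [NormedAddCommGroup F] [InnerProductSpace ℝ F] {π : E →L[ℝ] F} {p : F}
  {r : ℝ} {x : E}

theorem isExposed_preimage_singleton (hx : π x ∈ sphere p r) :
    IsExposed ℝ (π ⁻¹' closedBall p r) (π ⁻¹' {π x}) :=
  (isExposed_closedBall_singleton hx).preimage π

theorem isFace_preimage_singleton (hx : π x ∈ sphere p r) :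
    IsFace (π ⁻¹' closedBall p r) (π ⁻¹' {π x}) :=
  ⟨(convex_singleton _).linear_preimage π.toLinearMap, (isExposed_preimage_singleton hx).isExtreme⟩

end ExposedFibre

section TailProjection

variable {n : ℕ}

noncomputable def tailProj (I : Fin n) :
    EuclideanSpace ℝ (Fin n) →L[ℝ] EuclideanSpace ℝ (Finset.Ici I) :=
  (EuclideanSpace.equiv (Finset.Ici I) ℝ).symm.toContinuousLinearMap ∘L
    ContinuousLinearMap.pi fun j => EuclideanSpace.proj (j : Fin n)

@[simp]
theorem tailProj_apply (I : Fin n) (x : EuclideanSpace ℝ (Fin n)) (j : Finset.Ici I) :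
    tailProj I x j = x j := rfl

theorem tailProj_eq_tailProj_iff {I : Fin n} {x y : EuclideanSpace ℝ (Fin n)} :
    tailProj I x = tailProj I y ↔ ∀ j, I ≤ j → x j = y j := by
  simp [PiLp.ext_iff]

theorem tailProj_surjective (I : Fin n) : Function.Surjective (tailProj I) := by
  intro y
  refine ⟨WithLp.toLp 2 fun j => if h : j ∈ Finset.Ici I then y ⟨j, h⟩ else 0, ?_⟩
  ext j
  simp only [tailProj_apply, dif_pos j.2]

theorem finrank_ker_tailProj (I : Fin n) :
    Module.finrank ℝ (LinearMap.ker (tailProj I).toLinearMap) = I := by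
  have h := LinearMap.finrank_range_add_finrank_ker (tailProj I).toLinearMap
  rw [LinearMap.range_eq_top.2 (tailProj_surjective I), finrank_top, finrank_euclideanSpace,
    Fintype.card_coe, Fin.card_Ici, finrank_euclideanSpace_fin] at h
  have := I.isLt
  omega

theorem dist_tailProj_single_sq (I : Fin n) (c : ℝ) (x : EuclideanSpace ℝ (Fin n)) :
    dist (tailProj I x) (tailProj I (EuclideanSpace.single I (-c))) ^ 2 =
      (x I + c) ^ 2 + ∑ j ∈ Finset.Ioi I, x j ^ 2 := by
  rw [dist_eq_norm, ← map_sub, EuclideanSpace.real_norm_sq_eq]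
  simp only [tailProj_apply]
  rw [Finset.sum_coe_sort (Finset.Ici I) fun j => (x - EuclideanSpace.single I (-c)) j ^ 2,
    Finset.Ici_eq_cons_Ioi, Finset.sum_cons]
  congr 1
  · simp
  · refine Finset.sum_congr rfl fun j hj => ?_
    simp [(Finset.mem_Ioi.1 hj).ne']

theorem cyl_eq_preimage_closedBall (I : Fin n) (c : ℝ) {r : ℝ} (hr : 0 ≤ r) :
    Cyl n c r I = tailProj I ⁻¹' closedBall (tailProj I (EuclideanSpace.single I (-c))) r := by
  ext x
  rw [mem_preimage, mem_closedBall, ← sq_le_sq₀ dist_nonneg hr, dist_tailProj_single_sq]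
  rfl

theorem tailProj_mem_sphere_iff {I : Fin n} {c r : ℝ} (hr : 0 ≤ r) {x : EuclideanSpace ℝ (Fin n)} :
    tailProj I x ∈ sphere (tailProj I (EuclideanSpace.single I (-c))) r ↔
      (x I + c) ^ 2 + ∑ j ∈ Finset.Ioi I, x j ^ 2 = r ^ 2 := by
  rw [mem_sphere, ← sq_eq_sq₀ dist_nonneg hr, dist_tailProj_single_sq]

end TailProjection

theorem faces_of_cylinder_general {n : ℕ} (i : ℕ) (hin : i < n)
    (c r : ℝ) (hr0 : 0 < r) :
    faceDimSig (Cyl n c r ⟨i, hin⟩) = {i, n} ∧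
    ∀ F : Set (EuclideanSpace ℝ (Fin n)),
      IsFace (Cyl n c r ⟨i, hin⟩) F → F.Nonempty → F ≠ Cyl n c r ⟨i, hin⟩ →
      (∃ xb : EuclideanSpace ℝ (Fin n),
        (xb ⟨i, hin⟩ + c) ^ 2 + ∑ j ∈ Finset.Ioi (⟨i, hin⟩ : Fin n), (xb j) ^ 2 = r ^ 2 ∧
        F = {x | ∀ j : Fin n, i ≤ (j : ℕ) → x j = xb j}) ∧
      IsExposed ℝ (Cyl n c r ⟨i, hin⟩) F := by
  set I : Fin n := ⟨i, hin⟩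
  set π := tailProj I
  set a := EuclideanSpace.single I (-c)
  have hfiber (x : EuclideanSpace ℝ (Fin n)) : sdim (π ⁻¹' {π x}) = i :=
    (sdim_preimage_singleton π.toLinearMap x).trans (finrank_ker_tailProj I)
  have hfull : sdim (π ⁻¹' closedBall (π a) r) = n := by
    rw [sdim_of_interior_nonempty ⟨a, preimage_ball_subset_interior_preimage_closedBall π _ _
      (mem_ball_self hr0)⟩, finrank_euclideanSpace_fin]
  rw [cyl_eq_preimage_closedBall I c hr0.le]
  refine ⟨Subset.antisymm ?_ ?_, fun F hF ⟨x, hx⟩ hne => ?_⟩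
  · rintro _ ⟨F, hF, ⟨x, hx⟩, rfl⟩
    by_cases hne : F = π ⁻¹' closedBall (π a) r
    · exact .inr (hne ▸ hfull)
    · exact .inl ((hF.eq_preimage_singleton hne hx).2 ▸ hfiber x)
  · have hb : π (EuclideanSpace.single I (r - c)) ∈ sphere (π a) r :=
      (tailProj_mem_sphere_iff hr0.le).2 (by simp)
    rintro _ (rfl | rfl)
    · exact ⟨_, isFace_preimage_singleton hb, ⟨_, rfl⟩, hfiber _⟩
    · exact ⟨_, ⟨(convex_closedBall _ _).linear_preimage π.toLinearMap, .rfl⟩,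
        ⟨a, ball_subset_closedBall (mem_ball_self hr0)⟩, hfull⟩
  · obtain ⟨hxs, rfl⟩ := hF.eq_preimage_singleton hne hx
    exact ⟨⟨x, (tailProj_mem_sphere_iff hr0.le).1 hxs, Set.ext fun y => tailProj_eq_tailProj_iff⟩,
      isExposed_preimage_singleton hxs⟩

theorem faces_of_cylinder {n : ℕ} (hn : 2 ≤ n) (i : ℕ) (hi1 : 1 ≤ i) (hin : i < n)
    (c r : ℝ) (hc : 0 < c) (hr0 : 0 < r) (hrc : c < r) :
    faceDimSig (Cyl n c r ⟨i, hin⟩) = {i, n} ∧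
    ∀ F : Set (EuclideanSpace ℝ (Fin n)),
      IsFace (Cyl n c r ⟨i, hin⟩) F → F.Nonempty → F ≠ Cyl n c r ⟨i, hin⟩ →
      (∃ xb : EuclideanSpace ℝ (Fin n),
        (xb ⟨i, hin⟩ + c) ^ 2 + ∑ j ∈ Finset.Ioi (⟨i, hin⟩ : Fin n), (xb j) ^ 2 = r ^ 2 ∧
        F = {x | ∀ j : Fin n, i ≤ (j : ℕ) → x j = xb j}) ∧
      IsExposed ℝ (Cyl n c r ⟨i, hin⟩) F :=
  faces_of_cylinder_general i hin c r hr0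
end

section
/- Let C ⊆ ℝⁿ be a full-dimensional convex set with facial dimension signature I, and let Bⁿ be the closed unit Euclidean ball. Then the facial dimension signature of Bⁿ ∩ C is a subset of I ∪ {0}. -/
open Set Metric RealInnerProductSpace

variable {E : Type*} [NormedAddCommGroup E] [NormedSpace ℝ E]

/-!
Let `F` be a face of `Bⁿ ∩ C` of positive dimension. By strict convexity of the ball, `F` meets
the open ball, and we pick `m` in the relative interior of `F ∩ int Bⁿ`. The minimal face `G` of
`C` containing `m` consists of the points `y ∈ C` such that the ray from `y` through `m` continues
in `C` beyond `m`. Relative interiority of `m` gives `F ∩ int Bⁿ ⊆ G`. Conversely, since `m` lies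
in the open ball, for `y ∈ G ∩ Bⁿ` that ray can be cut short so as to stay in `Bⁿ`, which puts `m`
in an open segment of `Bⁿ ∩ C` with endpoint `y`; hence `G ∩ Bⁿ ⊆ F`. A convex set has the same
affine span as its intersection with any neighbourhood of one of its points, so `dim F = dim G`.
-/

open Filter Topology

section Ray

variable {C : Set E} {m y : E}

lemma exists_mem_Ioo_add_smul_mem {U : Set E} (hU : U ∈ 𝓝 m) (v : E) {δ : ℝ} (hδ : 0 < δ) :
    ∃ t ∈ Ioo 0 δ, m + t • v ∈ U := by
  have hcont : Tendsto (fun t : ℝ => m + t • v) (𝓝 0) (𝓝 m) :=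
    Continuous.tendsto' (by fun_prop) 0 m (by simp)
  exact Filter.nonempty_of_mem (inter_mem (Ioo_mem_nhdsGT hδ) (nhdsWithin_le_nhds (hcont hU)))

lemma mem_openSegment_add_smul_sub_s10 {ε : ℝ} (hε : 0 < ε) :
    m ∈ openSegment ℝ y (m + ε • (m - y)) := by
  refine ⟨ε / (1 + ε), 1 / (1 + ε), by positivity, by positivity, by field_simp; ring, ?_⟩
  match_scalars <;> field_simp
  ring

lemma Convex.add_smul_sub_mem_of_le (hC : Convex ℝ C) (hm : m ∈ C) {ε₀ ε : ℝ}
    (h : m + ε₀ • (m - y) ∈ C) (hε : 0 ≤ ε) (hεε₀ : ε ≤ ε₀) : m + ε • (m - y) ∈ C := by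
  obtain rfl | hε := hε.eq_or_lt
  · simpa using hm
  have hε₀ : 0 < ε₀ := hε.trans_le hεε₀
  convert hC.add_smul_sub_mem hm h ⟨(div_pos hε hε₀).le, div_le_one_of_le₀ hεε₀ hε₀.le⟩ using 2
  rw [add_sub_cancel_left, smul_smul, div_mul_cancel₀ _ hε₀.ne']

end Ray

section MinFace

variable {C : Set E} {m y z : E}

lemma mem_minFace_self : m ∈ minFace C m :=
  mem_sInter.2 fun _ hF => hF.2

lemma mem_minFace_of_mem_openSegment (hy : y ∈ C) (hz : z ∈ C) (hm : m ∈ openSegment ℝ y z) :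
    y ∈ minFace C m :=
  mem_sInter.2 fun _ hF => hF.1.2.left_mem_of_mem_openSegment hy hz hF.2 hm

lemma Convex.isFace_minFace (hC : Convex ℝ C) (hm : m ∈ C) : IsFace C (minFace C m) :=
  ⟨convex_sInter fun _ hF => hF.1.1,
    isExtreme_sInter ⟨C, ⟨hC, IsExtreme.rfl⟩, hm⟩ fun _ hF => hF.1.2⟩

lemma Convex.convex_setOf_add_smul_sub_mem (hC : Convex ℝ C) (hm : m ∈ C) :
    Convex ℝ {y | y ∈ C ∧ ∃ ε > (0 : ℝ), m + ε • (m - y) ∈ C} := by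
  rintro y₁ ⟨hy₁, ε₁, hε₁, h₁⟩ y₂ ⟨hy₂, ε₂, hε₂, h₂⟩ a b ha hb hab
  set ε := min ε₁ ε₂
  refine ⟨hC hy₁ hy₂ ha hb hab, ε, lt_min hε₁ hε₂, ?_⟩
  have key : m + ε • (m - (a • y₁ + b • y₂)) = a • (m + ε • (m - y₁)) + b • (m + ε • (m - y₂)) := by
    linear_combination (norm := module) -((1 + ε) * hab) • m
  rw [key]
  exact hC (hC.add_smul_sub_mem_of_le hm h₁ (lt_min hε₁ hε₂).le (min_le_left _ _))
    (hC.add_smul_sub_mem_of_le hm h₂ (lt_min hε₁ hε₂).le (min_le_right _ _)) ha hb hab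

lemma Convex.isExtreme_setOf_add_smul_sub_mem (hC : Convex ℝ C) :
    IsExtreme ℝ C {y | y ∈ C ∧ ∃ ε > (0 : ℝ), m + ε • (m - y) ∈ C} := by
  refine ⟨fun _ hy => hy.1, ?_⟩
  rintro x₁ hx₁ x₂ hx₂ _ ⟨-, ε, hε, hp⟩ ⟨c, e, hc, he, hce, rfl⟩
  refine ⟨hx₁, ε * c / (1 + ε * e), by positivity, ?_⟩
  have key : m + (ε * c / (1 + ε * e)) • (m - x₁) =
      (1 / (1 + ε * e)) • (m + ε • (m - (c • x₁ + e • x₂))) + (ε * e / (1 + ε * e)) • x₂ := by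
    match_scalars <;> field_simp
    · linear_combination ε * hce
    · ring
  rw [key]
  exact hC hp hx₂ (by positivity) (by positivity) (by field_simp)

lemma Convex.mem_minFace_iff (hC : Convex ℝ C) (hm : m ∈ C) :
    y ∈ minFace C m ↔ y ∈ C ∧ ∃ ε > (0 : ℝ), m + ε • (m - y) ∈ C := by
  refine ⟨fun hy => ?_, fun ⟨hy, ε, hε, h⟩ =>
    mem_minFace_of_mem_openSegment hy h (mem_openSegment_add_smul_sub_s10 hε)⟩
  refine sInter_subset_of_mem (t := {y | y ∈ C ∧ ∃ ε > (0 : ℝ), m + ε • (m - y) ∈ C}) ?_ hy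
  exact ⟨⟨hC.convex_setOf_add_smul_sub_mem hm, hC.isExtreme_setOf_add_smul_sub_mem⟩,
    hm, 1, one_pos, by simpa using hm⟩

lemma IsExtreme.minFace_inter_subset {F K : Set E} (hC : Convex ℝ C)
    (hF : IsExtreme ℝ (K ∩ C) F) (hmF : m ∈ F) (hK : K ∈ 𝓝 m) : minFace C m ∩ K ⊆ F := by
  have hmC : m ∈ C := (hF.subset hmF).2
  rintro y ⟨hyG, hyK⟩
  obtain ⟨hyC, ε₀, hε₀, hz⟩ := (hC.mem_minFace_iff hmC).1 hyG
  obtain ⟨ε, ⟨hε, hεε₀⟩, hzK⟩ := exists_mem_Ioo_add_smul_mem hK (m - y) hε₀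
  exact hF.left_mem_of_mem_openSegment ⟨hyK, hyC⟩
    ⟨hzK, hC.add_smul_sub_mem_of_le hmC hz hε.le hεε₀.le⟩ hmF (mem_openSegment_add_smul_sub_s10 hε)

end MinFace

section Dimension

variable {s U : Set E} {m y : E}

lemma exists_add_smul_sub_mem_of_mem_intrinsicInterior_s10 (hm : m ∈ intrinsicInterior ℝ s)
    (hy : y ∈ s) : ∃ ε > (0 : ℝ), m + ε • (m - y) ∈ s := by
  obtain ⟨m, hm, rfl⟩ := hm
  have hmem (ε : ℝ) : (m : E) + ε • ((m : E) - y) ∈ affineSpan ℝ s := by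
    simpa [add_comm] using
      (affineSpan ℝ s).smul_vsub_vadd_mem ε m.2 (subset_affineSpan ℝ s hy) m.2
  let ray : ℝ → affineSpan ℝ s := fun ε => ⟨_, hmem ε⟩
  have hray : Continuous ray := by unfold ray; fun_prop
  have hray0 : ray 0 = m := by simp [ray]
  obtain ⟨ε, hε, hεs⟩ := Filter.nonempty_of_mem (inter_mem (Ioo_mem_nhdsGT one_pos)
    (nhdsWithin_le_nhds (hray.continuousAt (hray0 ▸ isOpen_interior.mem_nhds hm))))
  exact ⟨ε, hε.1, interior_subset (s := ((↑) ⁻¹' s : Set (affineSpan ℝ s))) hεs⟩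

lemma Convex.affineSpan_inter_of_mem_nhds (hs : Convex ℝ s) (hm : m ∈ s) (hU : U ∈ 𝓝 m) :
    affineSpan ℝ (s ∩ U) = affineSpan ℝ s := by
  refine le_antisymm (affineSpan_mono ℝ inter_subset_left) (affineSpan_le.2 fun y hy => ?_)
  obtain ⟨t, ⟨ht₀, ht₁⟩, htU⟩ := exists_mem_Ioo_add_smul_mem hU (y - m) one_pos
  have hm' : m ∈ affineSpan ℝ (s ∩ U) := subset_affineSpan ℝ _ ⟨hm, mem_of_mem_nhds hU⟩
  have hp : m + t • (y - m) ∈ affineSpan ℝ (s ∩ U) :=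
    subset_affineSpan ℝ _ ⟨hs.add_smul_sub_mem hm hy ⟨ht₀.le, ht₁.le⟩, htU⟩
  simpa [smul_smul, ht₀.ne'] using (affineSpan ℝ (s ∩ U)).smul_vsub_vadd_mem t⁻¹ hp hm' hm'

lemma Convex.sdim_inter_of_mem_nhds (hs : Convex ℝ s) (hm : m ∈ s) (hU : U ∈ 𝓝 m) :
    sdim (s ∩ U) = sdim s := by
  rw [sdim, sdim, hs.affineSpan_inter_of_mem_nhds hm hU]

lemma sdim_mono [FiniteDimensional ℝ E] {t : Set E} (h : s ⊆ t) : sdim s ≤ sdim t :=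
  Submodule.finrank_mono (AffineSubspace.direction_le (affineSpan_mono ℝ h))

lemma Set.Subsingleton.sdim_eq_zero (hs : s.Subsingleton) : sdim s = 0 := by
  rw [sdim, direction_affineSpan, (vectorSpan_eq_bot_iff_subsingleton ℝ).2 hs, finrank_bot]

end Dimension

lemma Convex.inter_ball_nonempty [StrictConvexSpace ℝ E] {s : Set E} {x : E} {r : ℝ}
    (hs : Convex ℝ s) (hsr : s ⊆ closedBall x r) (hs' : s.Nontrivial) :
    (s ∩ ball x r).Nonempty := by
  obtain ⟨p, hp, q, hq, hpq⟩ := hs'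
  exact ⟨(1 / 2 : ℝ) • p + (1 / 2 : ℝ) • q, hs hp hq (by norm_num) (by norm_num) (by norm_num),
    combo_mem_ball_of_ne (hsr hp) (hsr hq) hpq (by norm_num) (by norm_num) (by norm_num)⟩

theorem faceDimSig_ball_inter_general {n : ℕ} (C : Set (EuclideanSpace ℝ (Fin n)))
    (hC : Convex ℝ C) :
    faceDimSig (closedBall (0 : EuclideanSpace ℝ (Fin n)) 1 ∩ C) ⊆ faceDimSig C ∪ {0} := by
  rintro _ ⟨F, ⟨hFconv, hFext⟩, hFne, rfl⟩
  by_cases hF : F.Subsingleton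
  · exact Or.inr hF.sdim_eq_zero
  set U := ball (0 : EuclideanSpace ℝ (Fin n)) 1
  have hFU : (F ∩ U).Nonempty :=
    hFconv.inter_ball_nonempty (fun x hx => (hFext.subset hx).1) (not_subsingleton_iff.1 hF)
  obtain ⟨m, hm⟩ := hFU.intrinsicInterior (hFconv.inter (convex_ball 0 1))
  obtain ⟨hmF, hmU⟩ := intrinsicInterior_subset hm
  have hmC : m ∈ C := (hFext.subset hmF).2
  have hFUG : F ∩ U ⊆ minFace C m := fun y hy => by
    obtain ⟨ε, hε, hz⟩ := exists_add_smul_sub_mem_of_mem_intrinsicInterior_s10 hm hy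
    exact (hC.mem_minFace_iff hmC).2 ⟨(hFext.subset hy.1).2, ε, hε, (hFext.subset hz.1).2⟩
  have hGF : minFace C m ∩ closedBall 0 1 ⊆ F :=
    hFext.minFace_inter_subset hC hmF (closedBall_mem_nhds_of_mem hmU)
  have hGface := hC.isFace_minFace hmC
  have hUm : U ∈ 𝓝 m := isOpen_ball.mem_nhds hmU
  refine .inl ⟨minFace C m, hGface, ⟨m, mem_minFace_self⟩, le_antisymm ?_ ?_⟩
  · calc sdim (minFace C m) = sdim (minFace C m ∩ U) :=
          (hGface.1.sdim_inter_of_mem_nhds mem_minFace_self hUm).symm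
      _ ≤ sdim F := sdim_mono ((inter_subset_inter_right _ ball_subset_closedBall).trans hGF)
  · calc sdim F = sdim (F ∩ U) := (hFconv.sdim_inter_of_mem_nhds hmF hUm).symm
      _ ≤ sdim (minFace C m) := sdim_mono hFUG

theorem faceDimSig_ball_inter {n : ℕ} (C : Set (EuclideanSpace ℝ (Fin n)))
    (hC : Convex ℝ C) (hfull : sdim C = n) :
    faceDimSig (closedBall (0 : EuclideanSpace ℝ (Fin n)) 1 ∩ C) ⊆ faceDimSig C ∪ {0} :=
  faceDimSig_ball_inter_general C hC
end

section
/- Fix c, r > 0 with 1 + c > r > √(c² + √2·c + 1). For integers 0 < j < i < n, the unit ball Bⁿ, the boundary of Cⱼⁿ, and the boundary of Cᵢⁿ have empty common intersection, where Cₖⁿ = {x ∈ ℝⁿ : (x_{k+1}+c)² + x_{k+2}² + ⋯ + x_n² ≤ r²}. -/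
open Set Metric RealInnerProductSpace

variable {E : Type*} [NormedAddCommGroup E] [NormedSpace ℝ E]

lemma frontier_eq' {n : ℕ} (c r : ℝ) (i : Fin n) (x : EuclideanSpace ℝ (Fin n))
    (hx : x ∈ frontier (Cyl n c r i)) :
    (x i + c) ^ 2 + ∑ j ∈ Finset.Ioi i, (x j) ^ 2 = r ^ 2 := by
  have hcont : Continuous fun x : EuclideanSpace ℝ (Fin n) =>
      (x i + c) ^ 2 + ∑ j ∈ Finset.Ioi i, (x j) ^ 2 := by fun_prop
  exact frontier_le_subset_eq hcont continuous_const hx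

lemma key' {n : ℕ} (c r : ℝ) (hc : 0 < c)
    (hr2 : c ^ 2 + Real.sqrt 2 * c + 1 < r ^ 2) (i : Fin n)
    (x : EuclideanSpace ℝ (Fin n)) (hB : ∑ k, (x k) ^ 2 ≤ 1)
    (hf : (x i + c) ^ 2 + ∑ j ∈ Finset.Ioi i, (x j) ^ 2 = r ^ 2) :
    Real.sqrt 2 / 2 < x i := by
  have hsub : (x i) ^ 2 + ∑ j ∈ Finset.Ioi i, (x j) ^ 2 ≤ 1 := by
    calc (x i) ^ 2 + ∑ j ∈ Finset.Ioi i, (x j) ^ 2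
        = ∑ j ∈ insert i (Finset.Ioi i), (x j) ^ 2 := by
          rw [Finset.sum_insert (by simp)]
      _ ≤ ∑ k, (x k) ^ 2 := Finset.sum_le_sum_of_subset_of_nonneg
          (Finset.subset_univ _) (fun _ _ _ => sq_nonneg _)
      _ ≤ 1 := hB
  have h2 : Real.sqrt 2 * c < 2 * c * x i := by nlinarith
  have := (div_lt_iff₀ (by positivity : (0:ℝ) < 2 * c)).mpr
    (by linarith [mul_comm (2*c) (x i)] : Real.sqrt 2 * c < x i * (2 * c))
  calc Real.sqrt 2 / 2 = Real.sqrt 2 * c / (2 * c) := by field_simp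
    _ < x i := this

theorem boundaries_disjoint {n : ℕ} (c r : ℝ) (hc : 0 < c) (hr0 : 0 < r)
    (hr1 : r < 1 + c) (hr2 : Real.sqrt (c ^ 2 + Real.sqrt 2 * c + 1) < r)
    (j i : ℕ) (hj : 0 < j) (hji : j < i) (hin : i < n) :
    closedBall (0 : EuclideanSpace ℝ (Fin n)) 1 ∩
      frontier (Cyl n c r ⟨j, lt_trans hji hin⟩) ∩ frontier (Cyl n c r ⟨i, hin⟩) = ∅ := by
  ext x
  simp only [mem_inter_iff, mem_closedBall, mem_empty_iff_false, iff_false, not_and,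
    dist_zero_right]
  rintro ⟨hxB, hxj⟩ hxi
  have hr2' : c ^ 2 + Real.sqrt 2 * c + 1 < r ^ 2 := by
    have h0 : (0:ℝ) ≤ c ^ 2 + Real.sqrt 2 * c + 1 := by positivity
    nlinarith [Real.sq_sqrt h0, Real.sqrt_nonneg (c ^ 2 + Real.sqrt 2 * c + 1)]
  have hB : ∑ k, (x k) ^ 2 ≤ 1 := by
    have hn := EuclideanSpace.norm_eq x
    have h1 : ∑ k, (x k) ^ 2 = ‖x‖ ^ 2 := by
      rw [hn, Real.sq_sqrt (by positivity)]
      simp [Real.norm_eq_abs, sq_abs]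
    rw [h1]
    nlinarith [norm_nonneg x]
  have hj' := key' c r hc hr2' _ x hB (frontier_eq' c r _ x hxj)
  have hi' := key' c r hc hr2' _ x hB (frontier_eq' c r _ x hxi)
  have hne : (⟨j, lt_trans hji hin⟩ : Fin n) ≠ ⟨i, hin⟩ := by
    simp [Fin.ext_iff]; omega
  have hpair : (x ⟨j, lt_trans hji hin⟩) ^ 2 + (x ⟨i, hin⟩) ^ 2 ≤ 1 := by
    calc (x ⟨j, lt_trans hji hin⟩) ^ 2 + (x ⟨i, hin⟩) ^ 2
        = ∑ k ∈ ({⟨j, lt_trans hji hin⟩, ⟨i, hin⟩} : Finset (Fin n)), (x k) ^ 2 := by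
          rw [Finset.sum_pair hne]
      _ ≤ ∑ k, (x k) ^ 2 := Finset.sum_le_sum_of_subset_of_nonneg
          (Finset.subset_univ _) (fun _ _ _ => sq_nonneg _)
      _ ≤ 1 := hB
  nlinarith [Real.sq_sqrt (by norm_num : (0:ℝ) ≤ 2), Real.sqrt_nonneg 2]
end

section
/- Suppose a convex set C ⊆ ℝⁿ is the solution set of m convex quadratic inequalities with facial dimension signature I, where n = max I. Then there exist integers d₁ ≥ d₂ ≥ ⋯ ≥ d_m in {0,…,n−1} such that I ⊆ {n} ∪ ⋃_{k=1}^m [max{0, Σ_{j=1}^k d_j − (k−1)n}, d_k] ∩ ℤ. -/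
open Set Metric RealInnerProductSpace

variable {E : Type*} [NormedAddCommGroup E] [NormedSpace ℝ E]

/-- `S` is the solution set of `k` convex quadratic inequalities. -/
def QuadRep {N : ℕ} (S : Set (EuclideanSpace ℝ (Fin N))) (k : ℕ) : Prop :=
  ∃ (Q : Fin k → (EuclideanSpace ℝ (Fin N) →ₗ[ℝ] EuclideanSpace ℝ (Fin N)))
    (a : Fin k → EuclideanSpace ℝ (Fin N)) (α : Fin k → ℝ),
    (∀ j x, (0 : ℝ) ≤ ⟪Q j x, x⟫) ∧
    (∀ j x y, ⟪Q j x, y⟫ = ⟪x, Q j y⟫) ∧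
    S = {x | ∀ j, ⟪Q j x, x⟫ + 2 * ⟪a j, x⟫ + α j ≤ 0}

/-!
For a nonempty face `F` of `C = {x | ∀ j, q j x ≤ 0}`, the direction of the affine hull of `F` is
the intersection of the lineality spaces `ker Q j ⊓ (ℝ ∙ a j)ᗮ` of the constraints vanishing on
all of `F`. Differences of points of `F` lie in them by the midpoint identity for `q j`;
conversely, from a point of `F` at which all other constraints are strict one can move along a
common lineality direction without leaving `C`, hence, `F` being a face, without leaving `F`.
Codimension is subadditive under intersection, so if the lineality dimensions are sorted
decreasingly and `k` is the last vanishing constraint, a face of dimension `i < n` satisfies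
`n - i ≤ ∑ j ≤ k, (n - d j)` and `i ≤ d k`.
-/

open Module Filter Topology

theorem LinearMap.IsPositive.apply_eq_zero_of_inner_self_eq_zero {V : Type*}
    [NormedAddCommGroup V] [InnerProductSpace ℝ V] {T : V →ₗ[ℝ] V} (hT : T.IsPositive) {v : V}
    (hv : ⟪T v, v⟫ = 0) : T v = 0 := by
  have hquad : ∀ t : ℝ, 0 ≤ ⟪T (T v), T v⟫ * (t * t) + 2 * ⟪T v, T v⟫ * t + 0 := fun t => by
    have hsymm : ⟪T (T v), v⟫ = ⟪T v, T v⟫ := hT.isSymmetric _ _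
    have := hT.inner_nonneg_left (v + t • T v)
    simp only [map_add, map_smul, inner_add_left, inner_add_right, real_inner_smul_left,
      real_inner_smul_right, hv, hsymm] at this
    linarith
  have h := discrim_le_zero hquad
  rw [discrim, mul_zero, sub_zero] at h
  have h0 : 2 * ⟪T v, T v⟫ = 0 := pow_eq_zero_iff two_ne_zero |>.1 (le_antisymm h (sq_nonneg _))
  exact (inner_self_eq_zero (𝕜 := ℝ)).1 (by linarith)

theorem exists_forall_eq_zero_or_lt_zero {W ι : Type*} [AddCommGroup W] [Module ℝ W]
    [Fintype ι] {F : Set W} (hne : F.Nonempty) {f : ι → W → ℝ} (hf : ∀ i, ConvexOn ℝ F (f i))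
    (hle : ∀ i, ∀ y ∈ F, f i y ≤ 0) :
    ∃ x ∈ F, ∀ i, (∀ y ∈ F, f i y = 0) ∨ f i x < 0 := by
  classical
  suffices ∀ s : Finset ι, ∃ x ∈ F, ∀ i ∈ s, (∀ y ∈ F, f i y = 0) ∨ f i x < 0 by
    obtain ⟨x, hx, h⟩ := this Finset.univ
    exact ⟨x, hx, fun i => h i (Finset.mem_univ i)⟩
  intro s
  induction s using Finset.induction_on with
  | empty => exact hne.imp fun x hx => ⟨hx, by simp⟩
  | insert j s _ ih =>
    obtain ⟨x, hx, hxs⟩ := ih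
    by_cases hj : ∀ y ∈ F, f j y = 0
    · refine ⟨x, hx, fun i hi => ?_⟩
      rcases Finset.mem_insert.1 hi with rfl | hi
      exacts [Or.inl hj, hxs i hi]
    push Not at hj
    obtain ⟨y, hy, hyj⟩ := hj
    have hmid : ∀ i, f i ((1 / 2 : ℝ) • x + (1 / 2 : ℝ) • y) ≤ (f i x + f i y) / 2 := fun i => by
      have := (hf i).2 hx hy (by norm_num) (by norm_num) (add_halves 1)
      simp only [smul_eq_mul] at this
      linarith
    refine ⟨_, (hf j).1 hx hy (by norm_num) (by norm_num) (add_halves 1), fun i hi => ?_⟩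
    have hxi := hle i x hx
    have hyi := hle i y hy
    have hmidi := hmid i
    rcases Finset.mem_insert.1 hi with rfl | hi
    · exact Or.inr (by linarith [lt_of_le_of_ne hyi hyj])
    · exact (hxs i hi).imp_right fun hxi' => by linarith

theorem Submodule.finrank_sub_finrank_finset_inf_le {K W ι : Type*} [DivisionRing K]
    [AddCommGroup W] [Module K W] [FiniteDimensional K W] (p : ι → Submodule K W)
    (s : Finset ι) :
    finrank K W - finrank K ↥(s.inf p) ≤ ∑ i ∈ s, (finrank K W - finrank K (p i)) := by
  classical
  induction s using Finset.induction_on with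
  | empty => rw [Finset.inf_empty, finrank_top, Nat.sub_self]; exact Nat.zero_le _
  | insert j s hj ih =>
    rw [Finset.inf_insert, Finset.sum_insert hj]
    have := finrank_sup_add_finrank_inf_eq (p j) (s.inf p)
    have := (p j ⊔ s.inf p).finrank_le
    have := (p j).finrank_le
    omega

structure ConvexQuadratic (V : Type*) [NormedAddCommGroup V] [InnerProductSpace ℝ V] where
  Q : V →ₗ[ℝ] V
  a : V
  α : ℝ
  isPositive : Q.IsPositive

namespace ConvexQuadratic

variable {V : Type*} [NormedAddCommGroup V] [InnerProductSpace ℝ V] (q : ConvexQuadratic V)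

@[coe] noncomputable def toFun (x : V) : ℝ := ⟪q.Q x, x⟫ + 2 * ⟪q.a, x⟫ + q.α

noncomputable instance : CoeFun (ConvexQuadratic V) fun _ => V → ℝ := ⟨toFun⟩

theorem apply_def (x : V) : q x = ⟪q.Q x, x⟫ + 2 * ⟪q.a, x⟫ + q.α := rfl

noncomputable def lineality : Submodule ℝ V := LinearMap.ker q.Q ⊓ (ℝ ∙ q.a)ᗮ

theorem mem_lineality {v : V} : v ∈ q.lineality ↔ q.Q v = 0 ∧ ⟪q.a, v⟫ = 0 := by
  rw [lineality, Submodule.mem_inf, LinearMap.mem_ker,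
    Submodule.mem_orthogonal_singleton_iff_inner_right]

theorem apply_add_smul (x v : V) (t : ℝ) :
    q (x + t • v) = q x + 2 * t * (⟪q.Q x, v⟫ + ⟪q.a, v⟫) + t ^ 2 * ⟪q.Q v, v⟫ := by
  have hsymm : ⟪q.Q v, x⟫ = ⟪q.Q x, v⟫ := by rw [q.isPositive.isSymmetric, real_inner_comm]
  simp only [apply_def, map_add, map_smul, inner_add_left, inner_add_right, real_inner_smul_left,
    real_inner_smul_right, hsymm]
  ring

theorem apply_add_smul_of_mem_lineality (x : V) {v : V} (hv : v ∈ q.lineality) (t : ℝ) :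
    q (x + t • v) = q x := by
  obtain ⟨hQv, hav⟩ := q.mem_lineality.1 hv
  have hxv : ⟪q.Q x, v⟫ = 0 := by rw [q.isPositive.isSymmetric, hQv, inner_zero_right]
  rw [apply_add_smul, hxv, hQv, hav, inner_zero_left]
  ring

theorem continuous_apply_add_smul (x v : V) : Continuous fun t : ℝ => q (x + t • v) := by
  simp only [apply_add_smul]
  fun_prop

theorem apply_sub_apply (y z : V) : q y - q z = ⟪q.Q (y - z), y + z⟫ + 2 * ⟪q.a, y - z⟫ := by
  have hsymm : ⟪q.Q z, y⟫ = ⟪q.Q y, z⟫ := by rw [q.isPositive.isSymmetric, real_inner_comm]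
  simp only [apply_def, map_sub, inner_sub_left, inner_add_right, inner_sub_right, hsymm]
  ring

theorem apply_add_smul_add {s t : ℝ} (hst : s + t = 1) (y z : V) :
    q (s • y + t • z) = s * q y + t * q z - s * t * ⟪q.Q (y - z), y - z⟫ := by
  obtain rfl : s = 1 - t := by linarith
  have hsymm : ⟪q.Q z, y⟫ = ⟪q.Q y, z⟫ := by rw [q.isPositive.isSymmetric, real_inner_comm]
  simp only [apply_def, map_add, map_sub, map_smul, inner_add_left, inner_add_right,
    inner_sub_left, inner_sub_right, real_inner_smul_left, real_inner_smul_right, hsymm]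
  ring

theorem convexOn : ConvexOn ℝ univ q := by
  refine ⟨convex_univ, fun y _ z _ s t hs ht hst => ?_⟩
  rw [q.apply_add_smul_add hst, smul_eq_mul, smul_eq_mul]
  have := mul_nonneg (mul_nonneg hs ht) (q.isPositive.inner_nonneg_left (y - z))
  linarith

theorem vectorSpan_le_lineality {F : Set V} (hF : Convex ℝ F) (hq : ∀ y ∈ F, q y = 0) :
    vectorSpan ℝ F ≤ q.lineality := by
  rw [vectorSpan_def, Submodule.span_le]
  rintro _ ⟨y, hy, z, hz, rfl⟩
  change y - z ∈ q.lineality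
  have hmid := hq _ (hF hy hz (by norm_num) (by norm_num) (add_halves 1))
  rw [q.apply_add_smul_add (add_halves 1), hq y hy, hq z hz] at hmid
  have hQ : q.Q (y - z) = 0 := q.isPositive.apply_eq_zero_of_inner_self_eq_zero (by linarith)
  have hdiff := q.apply_sub_apply y z
  rw [hQ, hq y hy, hq z hz, inner_zero_left] at hdiff
  exact q.mem_lineality.2 ⟨hQ, by linarith⟩

/-- Capped at `finrank ℝ V - 1`, which only matters when `q` is constant: then `{q ≤ 0}` has no
proper faces. -/
noncomputable def properFaceDim [FiniteDimensional ℝ V] : ℕ :=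
  min (finrank ℝ q.lineality) (finrank ℝ V - 1)

end ConvexQuadratic

section Faces

variable {V ι : Type*} [NormedAddCommGroup V] [InnerProductSpace ℝ V] [Fintype ι]
  (q : ι → ConvexQuadratic V) {F : Set V}

/-- At a point `x` of `F` where every constraint not vanishing on `F` is strict, the constraints
vanishing on `F` are constant along `v`, so `x ± t • v` stays in the set for small `t`, and
extremality of `F` puts `x + t • v` in `F`. -/
theorem mem_vectorSpan_of_forall_mem_lineality (hFc : Convex ℝ F)
    (hFe : IsExtreme ℝ {x | ∀ i, q i x ≤ 0} F) (hne : F.Nonempty) {v : V}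
    (hv : ∀ i, (∀ y ∈ F, q i y = 0) → v ∈ (q i).lineality) : v ∈ vectorSpan ℝ F := by
  obtain ⟨x, hxF, hx⟩ := exists_forall_eq_zero_or_lt_zero hne
    (fun i => (q i).convexOn.subset (subset_univ F) hFc) fun i y hy => hFe.subset hy i
  have hnear : ∀ᶠ t in 𝓝 (0 : ℝ), x + t • v ∈ {x | ∀ i, q i x ≤ 0} := by
    refine eventually_all.2 fun i => ?_
    rcases hx i with hzero | hlt
    · refine Eventually.of_forall fun t => ?_
      rw [(q i).apply_add_smul_of_mem_lineality x (hv i hzero)]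
      exact (hzero x hxF).le
    · have hcont := ((q i).continuous_apply_add_smul x v).tendsto 0
      rw [zero_smul, add_zero] at hcont
      exact (hcont.eventually_lt_const hlt).mono fun _ => le_of_lt
  have hnear_neg := (continuous_neg.tendsto' (0 : ℝ) 0 neg_zero).eventually hnear
  have hpair := ((hnear.and hnear_neg).filter_mono nhdsWithin_le_nhds).and
    (self_mem_nhdsWithin (s := {(0 : ℝ)}ᶜ))
  obtain ⟨t, ⟨hplus, hminus⟩, ht⟩ := hpair.exists
  have hseg : x ∈ openSegment ℝ (x + t • v) (x + -t • v) :=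
    ⟨1 / 2, 1 / 2, by norm_num, by norm_num, add_halves 1, by module⟩
  have htv : t • v ∈ vectorSpan ℝ F := by
    simpa using vsub_mem_vectorSpan ℝ (hFe.left_mem_of_mem_openSegment hplus hminus hxF hseg) hxF
  exact (Submodule.smul_mem_iff _ ht).1 htv

open Classical in
theorem vectorSpan_eq_inf_lineality (hFc : Convex ℝ F)
    (hFe : IsExtreme ℝ {x | ∀ i, q i x ≤ 0} F) (hne : F.Nonempty) :
    vectorSpan ℝ F =
      (Finset.univ.filter fun i => ∀ y ∈ F, q i y = 0).inf fun i => (q i).lineality := by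
  refine le_antisymm (Finset.le_inf fun i hi => ?_) fun v hv => ?_
  · exact (q i).vectorSpan_le_lineality hFc (Finset.mem_filter.1 hi).2
  · exact mem_vectorSpan_of_forall_mem_lineality q hFc hFe hne fun i hi =>
      Finset.inf_le (f := fun i => (q i).lineality)
        (Finset.mem_filter.2 ⟨Finset.mem_univ i, hi⟩) hv

end Faces

theorem Fin.sum_Iic_sub_mul_le_of_sub_le_sum_sub {m n i : ℕ} {d : Fin m → ℕ}
    (hd : ∀ j, d j ≤ n) (hi : i ≤ n) (k : Fin m) (h : n - i ≤ ∑ j ∈ Finset.Iic k, (n - d j)) :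
    (∑ j ∈ Finset.Iic k, (d j : ℤ)) - (k : ℕ) * n ≤ i := by
  have hcast : ((∑ j ∈ Finset.Iic k, (n - d j) : ℕ) : ℤ)
      = ((k : ℕ) + 1) * n - ∑ j ∈ Finset.Iic k, (d j : ℤ) := by
    rw [Nat.cast_sum, Finset.sum_congr rfl fun j _ => Nat.cast_sub (hd j), Finset.sum_sub_distrib,
      Finset.sum_const, Fin.card_Iic, nsmul_eq_mul]
    push_cast
    ring
  have := (Nat.cast_le (α := ℤ)).2 h
  rw [hcast, Nat.cast_sub hi] at this
  linarith

theorem faceDimSig_subset {V : Type*} [NormedAddCommGroup V] [InnerProductSpace ℝ V]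
    [FiniteDimensional ℝ V] {m : ℕ} (q : Fin m → ConvexQuadratic V) :
    faceDimSig {x | ∀ j, q j x ≤ 0} ⊆ {finrank ℝ V} ∪ ⋃ k : Fin m,
      {i : ℕ | (∑ j ∈ Finset.Iic k, ((q j).properFaceDim : ℤ)) - (k : ℕ) * finrank ℝ V ≤ i ∧
        i ≤ (q k).properFaceDim} := by
  classical
  rintro _ ⟨F, ⟨hFc, hFe⟩, hne, rfl⟩
  rw [sdim, direction_affineSpan, vectorSpan_eq_inf_lineality q hFc hFe hne]
  set Z := Finset.univ.filter fun j => ∀ y ∈ F, q j y = 0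
  set n := finrank ℝ V
  by_cases hfull : finrank ℝ ↥(Z.inf fun j => (q j).lineality) = n
  · exact Or.inl hfull
  have hlt := lt_of_le_of_ne (Submodule.finrank_le _) hfull
  have hZ : Z.Nonempty := Finset.nonempty_iff_ne_empty.2 fun hZ => by
    rw [hZ, Finset.inf_empty, finrank_top] at hfull
    exact hfull rfl
  set k := Z.max' hZ
  have hd : ∀ j, (q j).properFaceDim ≤ n := fun j => (min_le_right _ _).trans (Nat.sub_le _ _)
  refine Or.inr (mem_iUnion.2 ⟨k, Fin.sum_Iic_sub_mul_le_of_sub_le_sum_sub hd hlt.le k ?_, ?_⟩)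
  · calc n - finrank ℝ ↥(Z.inf fun j => (q j).lineality)
        ≤ ∑ j ∈ Z, (n - finrank ℝ (q j).lineality) :=
          Submodule.finrank_sub_finrank_finset_inf_le _ Z
      _ ≤ ∑ j ∈ Z, (n - (q j).properFaceDim) :=
          Finset.sum_le_sum fun j _ => Nat.sub_le_sub_left (min_le_left _ _) n
      _ ≤ ∑ j ∈ Finset.Iic k, (n - (q j).properFaceDim) :=
          Finset.sum_le_sum_of_subset fun j hj => Finset.mem_Iic.2 (Z.le_max' j hj)
  · exact le_min (Submodule.finrank_mono (Finset.inf_le (Z.max'_mem hZ))) (by omega)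

theorem lower_bound_general {n m : ℕ} (C : Set (EuclideanSpace ℝ (Fin n)))
    (hrep : QuadRep C m) :
    ∃ d : Fin m → ℕ, Antitone d ∧ (∀ k, d k ≤ n - 1) ∧
      faceDimSig C ⊆ {n} ∪ ⋃ k : Fin m,
        {i : ℕ | (∑ j ∈ Finset.Iic k, (d j : ℤ)) - (k : ℕ) * n ≤ (i : ℤ) ∧ i ≤ d k} := by
  obtain ⟨Q, a, α, hpsd, hsym, rfl⟩ := hrep
  let q : Fin m → ConvexQuadratic (EuclideanSpace ℝ (Fin n)) :=
    fun j => ⟨Q j, a j, α j, (Q j).isPositive_iff.2 ⟨hsym j, hpsd j⟩⟩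
  let σ : Equiv.Perm (Fin m) := Fin.revPerm.trans (Tuple.sort fun j => (q j).properFaceDim)
  have hC : {x | ∀ j, ⟪Q j x, x⟫ + 2 * ⟪a j, x⟫ + α j ≤ 0} = {x | ∀ j, q (σ j) x ≤ 0} :=
    Set.ext fun x => σ.forall_congr_right.symm
  refine ⟨fun k => (q (σ k)).properFaceDim,
    (Tuple.monotone_sort fun j => (q j).properFaceDim).comp_antitone Fin.rev_anti,
    fun k => (min_le_right _ _).trans_eq (by rw [finrank_euclideanSpace_fin]), ?_⟩
  simpa [hC, finrank_euclideanSpace_fin] using faceDimSig_subset (q ∘ σ)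

theorem lower_bound {n m : ℕ} (C : Set (EuclideanSpace ℝ (Fin n))) (hC : Convex ℝ C)
    (hrep : QuadRep C m) (hmax : n ∈ faceDimSig C) (hub : ∀ i ∈ faceDimSig C, i ≤ n) :
    ∃ d : Fin m → ℕ, Antitone d ∧ (∀ k, d k ≤ n - 1) ∧
      faceDimSig C ⊆ {n} ∪ ⋃ k : Fin m,
        {i : ℕ | (∑ j ∈ Finset.Iic k, (d j : ℤ)) - (k : ℕ) * n ≤ (i : ℤ) ∧ i ≤ d k} :=
  lower_bound_general C hrep
end

section
/- For each positive integer K, the set S = {x ∈ ℝ^(2^K − 1) : x_{2^{k−1}}² + ⋯ + x_{2^k − 1}² ≤ 1 for all k ∈ {1,…,K}}, a direct sum of Euclidean balls of dimensions 1, 2, 4, …, 2^{K−1}, has facial dimension signature {0, 1, 2, …, 2^K − 1}. -/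
open Set Metric RealInnerProductSpace

variable {E : Type*} [NormedAddCommGroup E] [NormedSpace ℝ E]

/-! The body is a product of unit balls, one for each block of coordinates. Choose a pole in every
block, a coordinate at which the block's ball touches the hyperplane `x_pole = 1`. For a set `T`
of blocks, pinning the poles of the blocks outside `T` to `1` cuts out a face: each coordinate of
a point of the body is at most `1`, so these hyperplanes support the body, and a ball meets such a
hyperplane only in the pole itself. The face is thus a translate of the product of the balls in
`T`, of dimension the number of coordinates in those blocks. With blocks of sizes
`1, 2, …, 2 ^ (K - 1)`, binary expansion realises every dimension up to `2 ^ K - 1`. -/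

open Finset

theorem Module.Basis.finrank_span_image {ι K V : Type*} [DivisionRing K] [AddCommGroup V]
    [Module K V] (b : Module.Basis ι K V) (s : Finset ι) :
    Module.finrank K (Submodule.span K (b '' s)) = #s := by
  rw [show b '' s = Set.range (b ∘ ((↑) : s → ι)) by rw [Set.range_comp, Subtype.range_coe],
    finrank_span_eq_card (b.linearIndependent.comp _ Subtype.val_injective), Fintype.card_coe]

theorem faceDimSig_subset_Iic [FiniteDimensional ℝ E] (C : Set E) :
    faceDimSig C ⊆ Set.Iic (Module.finrank ℝ E) := by
  rintro _ ⟨F, -, -, rfl⟩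
  exact Submodule.finrank_le _

section BlockBallProd

variable {ι κ : Type*} [Fintype ι] [DecidableEq κ]

def blockBallProd (blk : ι → κ) : Set (EuclideanSpace ℝ ι) :=
  {x | ∀ b, ∑ j ∈ univ.filter (blk · = b), x j ^ 2 ≤ 1}

variable {blk : ι → κ} {x : EuclideanSpace ℝ ι}

theorem sq_apply_le_one_of_mem_blockBallProd (hx : x ∈ blockBallProd blk) (i : ι) :
    x i ^ 2 ≤ 1 :=
  (single_le_sum (f := fun j ↦ x j ^ 2) (fun j _ ↦ sq_nonneg (x j))
    (show i ∈ univ.filter (blk · = blk i) by simp)).trans (hx (blk i))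

theorem apply_le_one_of_mem_blockBallProd (hx : x ∈ blockBallProd blk) (i : ι) : x i ≤ 1 :=
  (le_abs_self _).trans ((sq_le_one_iff_abs_le_one _).1 (sq_apply_le_one_of_mem_blockBallProd hx i))

theorem apply_eq_zero_of_mem_blockBallProd {i j : ι} (hx : x ∈ blockBallProd blk) (hi : x i = 1)
    (hji : blk j = blk i) (hne : j ≠ i) : x j = 0 := by
  classical
  have hpair : x i ^ 2 + x j ^ 2 ≤ 1 := by
    rw [← sum_pair (f := fun k ↦ x k ^ 2) hne.symm]
    refine (sum_le_sum_of_subset_of_nonneg ?_ fun k _ _ ↦ sq_nonneg (x k)).trans (hx (blk i))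
    simp [Finset.insert_subset_iff, hji]
  rw [hi] at hpair
  nlinarith [sq_nonneg (x j)]

theorem mem_blockBallProd_of_sparse (hx : ∀ i, x i ^ 2 ≤ 1)
    (hsparse : ∀ i j, blk i = blk j → x i ≠ 0 → x j ≠ 0 → i = j) :
    x ∈ blockBallProd blk := by
  intro b
  by_cases hb : ∃ i, blk i = b ∧ x i ≠ 0
  · obtain ⟨i, rfl, hi⟩ := hb
    rw [sum_eq_single_of_mem i (by simp)]
    · exact hx i
    · intro j hj hji
      by_contra hj0
      exact hji (hsparse j i (mem_filter.1 hj).2 (by simpa using hj0) hi)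
  · push Not at hb
    rw [sum_eq_zero fun j hj ↦ by simp [hb j (mem_filter.1 hj).2]]
    exact zero_le_one

theorem convex_blockBallProd : Convex ℝ (blockBallProd blk) := by
  intro x hx y hy a c ha hc hac b
  calc ∑ j ∈ univ.filter (blk · = b), (a • x + c • y) j ^ 2
      ≤ ∑ j ∈ univ.filter (blk · = b), (a * x j ^ 2 + c * y j ^ 2) := by
        refine sum_le_sum fun j _ ↦ ?_
        simp only [PiLp.add_apply, PiLp.smul_apply, smul_eq_mul]
        nlinarith [sq_nonneg (x j - y j), mul_nonneg ha hc]
    _ = a * ∑ j ∈ univ.filter (blk · = b), x j ^ 2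
          + c * ∑ j ∈ univ.filter (blk · = b), y j ^ 2 := by
        rw [sum_add_distrib, mul_sum, mul_sum]
    _ ≤ a * 1 + c * 1 := by gcongr; exacts [hx b, hy b]
    _ = 1 := by rw [mul_one, mul_one, hac]

end BlockBallProd

section PoleFace

variable {ι κ : Type*} [Fintype ι] [DecidableEq κ] {blk : ι → κ} {p : κ → ι}

variable (blk p) in
def poleFace (T : Finset κ) : Set (EuclideanSpace ℝ ι) :=
  blockBallProd blk ∩ {x | ∀ b ∉ T, x (p b) = 1}

theorem convex_poleFace (T : Finset κ) : Convex ℝ (poleFace blk p T) := by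
  refine convex_blockBallProd.inter fun x hx y hy a c _ _ hac b hb ↦ ?_
  simp [hx b hb, hy b hb, hac]

theorem isExtreme_poleFace (T : Finset κ) :
    IsExtreme ℝ (blockBallProd blk) (poleFace blk p T) := by
  refine ⟨inter_subset_left,
    fun x hx y hy z ⟨_, hz⟩ ⟨a, c, ha, hc, hac, hxyz⟩ ↦ ⟨hx, fun b hb ↦ ?_⟩⟩
  have hsum : a * x (p b) + c * y (p b) = 1 := by simpa [← hxyz] using hz b hb
  nlinarith [apply_le_one_of_mem_blockBallProd hx (p b), apply_le_one_of_mem_blockBallProd hy (p b)]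

theorem isFace_poleFace (T : Finset κ) : IsFace (blockBallProd blk) (poleFace blk p T) :=
  ⟨convex_poleFace T, isExtreme_poleFace T⟩

theorem indicator_mem_poleFace {T : Finset κ} {Q : Set ι} (hQ : Q.InjOn blk)
    (hpQ : ∀ b ∉ T, p b ∈ Q) :
    WithLp.toLp 2 (Q.indicator 1) ∈ poleFace blk p T := by
  classical
  refine ⟨mem_blockBallProd_of_sparse (fun i ↦ ?_) fun i j hij hi hj ↦ ?_, fun b hb ↦ ?_⟩
  · by_cases hi : i ∈ Q <;> simp [hi]
  · exact hQ (Set.mem_of_indicator_ne_zero hi) (Set.mem_of_indicator_ne_zero hj) hij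
  · simp [hpQ b hb]

variable {T : Finset κ}

theorem apply_eq_of_mem_poleFace (hp : Function.LeftInverse blk p) {x y : EuclideanSpace ℝ ι}
    (hx : x ∈ poleFace blk p T) (hy : y ∈ poleFace blk p T) {j : ι} (hj : blk j ∉ T) :
    x j = y j := by
  by_cases hjp : j = p (blk j)
  · rw [hjp, hx.2 _ hj, hy.2 _ hj]
  · rw [apply_eq_zero_of_mem_blockBallProd hx.1 (hx.2 _ hj) (hp (blk j)).symm hjp,
      apply_eq_zero_of_mem_blockBallProd hy.1 (hy.2 _ hj) (hp (blk j)).symm hjp]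

theorem basisFun_mem_vectorSpan_poleFace (hp : Function.LeftInverse blk p) {j : ι}
    (hj : blk j ∈ T) :
    (EuclideanSpace.basisFun ι ℝ).toBasis j ∈ vectorSpan ℝ (poleFace blk p T) := by
  classical
  set Q := p '' (↑T)ᶜ
  have hQ : Q.InjOn blk := hp.rightInvOn_range.injOn.mono (image_subset_range _ _)
  have hpQ : ∀ b ∉ T, p b ∈ Q := fun b hb ↦ mem_image_of_mem p hb
  have hjQ' : blk j ∉ blk '' Q := by
    rintro ⟨_, ⟨b, hb, rfl⟩, hbj⟩
    rw [hp b] at hbj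
    exact hb (hbj ▸ hj)
  have hjQ : j ∉ Q := fun h ↦ hjQ' (mem_image_of_mem blk h)
  have hdiff : (EuclideanSpace.basisFun ι ℝ).toBasis j =
      WithLp.toLp 2 ((insert j Q).indicator (1 : ι → ℝ)) -ᵥ WithLp.toLp 2 (Q.indicator 1) := by
    ext i
    by_cases hij : i = j
    · subst hij; simp [hjQ]
    · simp [hij, Set.indicator_apply]
  rw [hdiff]
  exact vsub_mem_vectorSpan ℝ
    (indicator_mem_poleFace ((injOn_insert hjQ).2 ⟨hQ, hjQ'⟩)
      fun b hb ↦ mem_insert_of_mem j (hpQ b hb))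
    (indicator_mem_poleFace hQ hpQ)

theorem vectorSpan_poleFace (hp : Function.LeftInverse blk p) :
    vectorSpan ℝ (poleFace blk p T) = Submodule.span ℝ ((EuclideanSpace.basisFun ι ℝ).toBasis '' ↑(univ.filter (blk · ∈ T))) := by
  apply le_antisymm
  · refine Submodule.span_le.2 ?_
    rintro _ ⟨x, hx, y, hy, rfl⟩
    rw [SetLike.mem_coe, Module.Basis.mem_span_image]
    intro j hj
    by_contra hjT
    simp [apply_eq_of_mem_poleFace hp hx hy (by simpa using hjT)] at hj
  · refine Submodule.span_le.2 ?_
    rintro _ ⟨j, hj, rfl⟩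
    exact basisFun_mem_vectorSpan_poleFace hp (by simpa using hj)

theorem sdim_poleFace (hp : Function.LeftInverse blk p) :
    sdim (poleFace blk p T) = #(univ.filter (blk · ∈ T)) := by
  rw [sdim, direction_affineSpan, vectorSpan_poleFace hp, Module.Basis.finrank_span_image]

end PoleFace

theorem card_filter_mem_faceDimSig_blockBallProd {ι κ : Type*} [Fintype ι] [DecidableEq κ]
    {blk : ι → κ} (hblk : Function.Surjective blk) (T : Finset κ) :
    #(univ.filter (blk · ∈ T)) ∈ faceDimSig (blockBallProd blk) := by
  obtain ⟨p, hp⟩ := hblk.hasRightInverse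
  refine ⟨poleFace blk p T, isFace_poleFace T, ?_, sdim_poleFace hp⟩
  exact ⟨_, indicator_mem_poleFace hp.rightInvOn_range.injOn fun b _ ↦ mem_range_self b⟩

theorem Fin.card_filter_le_and_lt {n a b : ℕ} (hb : b ≤ n) :
    #(univ.filter fun i : Fin n ↦ a ≤ (i : ℕ) ∧ (i : ℕ) < b) = b - a := by
  rw [← card_map Fin.valEmbedding, ← Nat.card_Ico]
  congr 1
  ext m
  simp only [mem_map, mem_filter, Finset.mem_univ, true_and, Fin.valEmbedding_apply,
    Finset.mem_Ico]
  constructor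
  · rintro ⟨i, hi, rfl⟩
    exact hi
  · exact fun hm ↦ ⟨⟨m, by omega⟩, hm, rfl⟩

theorem Nat.log_two_succ_eq_iff {j k : ℕ} :
    Nat.log 2 (j + 1) = k ↔ 2 ^ k - 1 ≤ j ∧ j < 2 ^ (k + 1) - 1 := by
  rw [Nat.log_eq_iff (Or.inr ⟨one_lt_two, j.succ_ne_zero⟩)]
  have := Nat.one_le_two_pow (n := k)
  omega

theorem exists_finset_sum_two_pow_eq {K d : ℕ} (hd : d < 2 ^ K) :
    ∃ T : Finset (Fin K), ∑ k ∈ T, 2 ^ (k : ℕ) = d := by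
  have hlt : ∀ m ∈ d.bitIndices.toFinset, m < K := fun m hm ↦
    (Nat.pow_lt_pow_iff_right one_lt_two).1
      ((Nat.two_pow_le_of_mem_bitIndices (List.mem_toFinset.1 hm)).trans_lt hd)
  have := sum_map (d.bitIndices.toFinset.attachFin hlt) Fin.valEmbedding (2 ^ ·)
  rw [map_valEmbedding_attachFin, Finset.sum_toFinset_bitIndices_two_pow] at this
  exact ⟨_, this.symm⟩

section Dyadic

variable {K : ℕ}

-- Block `k` is `2 ^ k - 1 ≤ j < 2 ^ (k + 1) - 1`, the block `k + 1` of the statement.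
def dyadicBlock (K : ℕ) (j : Fin (2 ^ K - 1)) : Fin K :=
  ⟨Nat.log 2 (j + 1), Nat.log_lt_of_lt_pow (j : ℕ).succ_ne_zero (by omega)⟩

theorem filter_dyadicBlock_eq (k : Fin K) : univ.filter (dyadicBlock K · = k) =
    univ.filter fun j : Fin (2 ^ K - 1) ↦
      2 ^ (k : ℕ) - 1 ≤ (j : ℕ) ∧ (j : ℕ) < 2 ^ ((k : ℕ) + 1) - 1 := by
  ext j
  simp [dyadicBlock, Fin.ext_iff, Nat.log_two_succ_eq_iff]

theorem dyadicBlock_surjective (K : ℕ) : Function.Surjective (dyadicBlock K) := by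
  intro k
  have hk : 2 ^ ((k : ℕ) + 1) ≤ 2 ^ K := Nat.pow_le_pow_right two_pos k.isLt
  have := Nat.one_le_two_pow (n := k)
  refine ⟨⟨2 ^ (k : ℕ) - 1, by omega⟩, Fin.ext ?_⟩
  simp only [dyadicBlock, Nat.log_two_succ_eq_iff, pow_succ]
  omega

theorem card_filter_dyadicBlock_eq (k : Fin K) :
    #(univ.filter (dyadicBlock K · = k)) = 2 ^ (k : ℕ) := by
  have hk : 2 ^ ((k : ℕ) + 1) ≤ 2 ^ K := Nat.pow_le_pow_right two_pos k.isLt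
  rw [filter_dyadicBlock_eq, Fin.card_filter_le_and_lt (by omega), pow_succ]
  have := Nat.one_le_two_pow (n := k)
  omega

theorem card_filter_dyadicBlock_mem (T : Finset (Fin K)) :
    #(univ.filter (dyadicBlock K · ∈ T)) = ∑ k ∈ T, 2 ^ (k : ℕ) := by
  rw [card_eq_sum_card_fiberwise (t := T) fun j hj ↦ by simpa using hj]
  refine sum_congr rfl fun k hk ↦ ?_
  rw [filter_filter, ← card_filter_dyadicBlock_eq k]
  congr 1
  exact filter_congr fun j _ ↦ ⟨And.right, fun h ↦ ⟨h ▸ hk, h⟩⟩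

theorem setOf_eq_blockBallProd_dyadicBlock (K : ℕ) :
    {x : EuclideanSpace ℝ (Fin (2 ^ K - 1)) | ∀ k ∈ Finset.Icc 1 K,
      ∑ j ∈ Finset.univ.filter
          (fun j : Fin (2 ^ K - 1) => 2 ^ (k - 1) - 1 ≤ (j : ℕ) ∧ (j : ℕ) < 2 ^ k - 1),
        (x j) ^ 2 ≤ 1} = blockBallProd (dyadicBlock K) := by
  ext x
  simp only [blockBallProd, mem_ofPred_eq, filter_dyadicBlock_eq]
  constructor
  · intro h k
    simpa using h (k + 1) (mem_Icc.2 ⟨by omega, k.isLt⟩)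
  · intro h k hk
    obtain ⟨hk1, hkK⟩ := mem_Icc.1 hk
    simpa only [Nat.sub_add_cancel hk1] using h ⟨k - 1, by omega⟩

end Dyadic

theorem complete_signature_log_general (K : ℕ) :
    faceDimSig {x : EuclideanSpace ℝ (Fin (2 ^ K - 1)) |
        ∀ k ∈ Finset.Icc 1 K,
          ∑ j ∈ Finset.univ.filter
              (fun j : Fin (2 ^ K - 1) => 2 ^ (k - 1) - 1 ≤ (j : ℕ) ∧ (j : ℕ) < 2 ^ k - 1),
            (x j) ^ 2 ≤ 1} =
      {d : ℕ | d ≤ 2 ^ K - 1} := by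
  rw [setOf_eq_blockBallProd_dyadicBlock]
  refine subset_antisymm (fun d hd ↦ ?_) fun d hd ↦ ?_
  · simpa using faceDimSig_subset_Iic _ hd
  · obtain ⟨T, rfl⟩ :=
      exists_finset_sum_two_pow_eq (Nat.lt_of_le_sub_one (Nat.two_pow_pos K) hd)
    rw [← card_filter_dyadicBlock_mem]
    exact card_filter_mem_faceDimSig_blockBallProd (dyadicBlock_surjective K) T

theorem complete_signature_log (K : ℕ) (hK : 0 < K) :
    faceDimSig {x : EuclideanSpace ℝ (Fin (2 ^ K - 1)) |
        ∀ k ∈ Finset.Icc 1 K,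
          ∑ j ∈ Finset.univ.filter
              (fun j : Fin (2 ^ K - 1) => 2 ^ (k - 1) - 1 ≤ (j : ℕ) ∧ (j : ℕ) < 2 ^ k - 1),
            (x j) ^ 2 ≤ 1} =
      {d : ℕ | d ≤ 2 ^ K - 1} :=
  complete_signature_log_general K
end
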